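/- arXiv:2104.12220 — 4 statements merged into one kernel-verified Lean document; each statement's English description precedes it below -/
import Mathlib

section
/- Let β > 0, f ∈ 𝓑^β, u ∈ H^∞(𝔻) non-vanishing with fu ∈ 𝓑^β, and α > 1 a real number. Then f·u^α ∈ 𝓑^β, where u^α is defined via a branch of the logarithm of u, with the estimate ‖fu^α‖_{𝓑^β} ≤ ‖u‖_∞^α ‖f‖_{𝓑^β} + α‖u‖_∞^{α−1}‖fu‖_{𝓑^β} + (α−1)‖u‖_∞^α ‖f‖_{𝓑^β}. -/
/-!
With `u = exp L` and `g = f · exp (α L)`, eliminating `f L'` between `g' = f' e^{αL} + α f L' e^{αL}`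
and `(f u)' = f' u + f L' u` gives
`g' = α e^{(α-1)L} (f u)' + (1 - α) e^{αL} f'`.
Since `|e^{cL}| = |u|^c ≤ ‖u‖_∞^c` for `c ≥ 0`, weighting by `(1 - |z|²)^β` bounds the seminorm of `g`
by `α ‖u‖_∞^{α-1} ‖f u‖ + (α - 1) ‖u‖_∞^α ‖f‖`, while `|g(0)| ≤ ‖u‖_∞^α |f(0)|`.
-/

/-- The Bloch-type seminorm `sup_{z ∈ 𝔻} (1 - |z|²)^β |f'(z)|`. -/
noncomputable def blochSemi (β : ℝ) (f : ℂ → ℂ) : ℝ :=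
  ⨆ z : Metric.ball (0:ℂ) 1, (1 - ‖(z : ℂ)‖ ^ 2) ^ β * ‖deriv f (z : ℂ)‖

/-- The Bloch-type norm `|f(0)| + sup_{z ∈ 𝔻} (1 - |z|²)^β |f'(z)|`. -/
noncomputable def blochNorm (β : ℝ) (f : ℂ → ℂ) : ℝ := ‖f 0‖ + blochSemi β f

/-- The sup norm `‖u‖_∞ = sup_{z ∈ 𝔻} |u(z)|`. -/
noncomputable def supNorm (u : ℂ → ℂ) : ℝ := ⨆ z : Metric.ball (0:ℂ) 1, ‖u (z : ℂ)‖

/-- Membership in the Bloch-type space `𝓑^β`. -/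
def MemBloch (β : ℝ) (f : ℂ → ℂ) : Prop :=
  DifferentiableOn ℂ f (Metric.ball 0 1) ∧
    BddAbove (Set.range fun z : Metric.ball (0:ℂ) 1 =>
      (1 - ‖(z : ℂ)‖ ^ 2) ^ β * ‖deriv f (z : ℂ)‖)

open Complex Metric Filter Topology

theorem Complex.norm_exp_ofReal_mul (c : ℝ) (w : ℂ) : ‖exp (c * w)‖ = ‖exp w‖ ^ c := by
  rw [norm_exp, norm_exp, re_ofReal_mul, ← Real.exp_mul, mul_comm]

theorem deriv_mul_cexp_const_mul {f L : ℂ → ℂ} {z : ℂ} (hf : DifferentiableAt ℂ f z)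
    (hL : DifferentiableAt ℂ L z) (a : ℂ) :
    deriv (fun w => f w * exp (a * L w)) z =
      a * exp ((a - 1) * L z) * deriv (fun w => f w * exp (L w)) z
        + (1 - a) * exp (a * L z) * deriv f z := by
  have hsplit : exp (a * L z) = exp ((a - 1) * L z) * exp (L z) := by
    rw [← exp_add]; ring_nf
  rw [deriv_fun_mul hf (hL.const_mul a).cexp, deriv_fun_mul hf hL.cexp,
    deriv_cexp (hL.const_mul a), deriv_cexp hL, deriv_const_mul a hL, hsplit]
  ring

theorem norm_deriv_mul_cexp_ofReal_mul_le {f u L : ℂ → ℂ} {z : ℂ} {α M : ℝ} (hα : 1 ≤ α)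
    (hf : DifferentiableAt ℂ f z) (hL : DifferentiableAt ℂ L z) (hLu : exp ∘ L =ᶠ[𝓝 z] u)
    (hM : ‖u z‖ ≤ M) :
    ‖deriv (fun w => f w * exp (α * L w)) z‖ ≤
      α * M ^ (α - 1) * ‖deriv (fun w => f w * u w) z‖ + (α - 1) * M ^ α * ‖deriv f z‖ := by
  have hfu : deriv (fun w => f w * u w) z = deriv (fun w => f w * exp (L w)) z :=
    EventuallyEq.deriv_eq (hLu.mono fun w hw => congrArg (f w * ·) hw.symm)
  have hexp : ∀ c : ℝ, 0 ≤ c → ‖exp (c * L z)‖ ≤ M ^ c := fun c hc => by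
    rw [norm_exp_ofReal_mul, ← Function.comp_apply (f := exp), hLu.eq_of_nhds]
    exact Real.rpow_le_rpow (norm_nonneg _) hM hc
  have hα1 : ((α : ℂ) - 1) = ((α - 1 : ℝ) : ℂ) := by push_cast; ring
  have h1α : ‖1 - (α : ℂ)‖ = α - 1 := by
    rw [← norm_neg, neg_sub, hα1, norm_real, Real.norm_of_nonneg (by linarith)]
  rw [deriv_mul_cexp_const_mul hf hL, ← hfu]
  calc _ ≤ ‖α * exp ((α - 1) * L z) * deriv (fun w => f w * u w) z‖
          + ‖(1 - α) * exp (α * L z) * deriv f z‖ := norm_add_le _ _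
    _ = α * ‖exp (((α - 1 : ℝ) : ℂ) * L z)‖ * ‖deriv (fun w => f w * u w) z‖
          + (α - 1) * ‖exp (α * L z)‖ * ‖deriv f z‖ := by
        rw [norm_mul, norm_mul, norm_mul, norm_mul, h1α, hα1, norm_real,
          Real.norm_of_nonneg (by linarith)]
    _ ≤ _ := by
        gcongr
        exacts [hexp _ (by linarith), hexp _ (by linarith)]

instance : Nonempty (ball (0:ℂ) 1) := ⟨⟨0, mem_ball_self one_pos⟩⟩

theorem norm_le_supNorm {u : ℂ → ℂ}
    (hu : BddAbove (Set.range fun z : ball (0:ℂ) 1 => ‖u z‖)) {z : ℂ} (hz : z ∈ ball (0:ℂ) 1) :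
    ‖u z‖ ≤ supNorm u :=
  le_ciSup hu ⟨z, hz⟩

theorem supNorm_nonneg (u : ℂ → ℂ) : 0 ≤ supNorm u :=
  Real.iSup_nonneg fun _ => norm_nonneg _

section Bloch

variable {β : ℝ}

theorem blochWeight_nonneg (β : ℝ) {z : ℂ} (hz : z ∈ ball (0:ℂ) 1) : 0 ≤ (1 - ‖z‖ ^ 2) ^ β := by
  have : ‖z‖ < 1 := mem_ball_zero_iff.mp hz
  exact Real.rpow_nonneg (by nlinarith [norm_nonneg z]) β

theorem blochSemi_nonneg (β : ℝ) (f : ℂ → ℂ) : 0 ≤ blochSemi β f :=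
  Real.iSup_nonneg fun z => mul_nonneg (blochWeight_nonneg β z.2) (norm_nonneg _)

theorem MemBloch.le_blochSemi {f : ℂ → ℂ} (hf : MemBloch β f) (z : ball (0:ℂ) 1) :
    (1 - ‖(z : ℂ)‖ ^ 2) ^ β * ‖deriv f z‖ ≤ blochSemi β f :=
  le_ciSup hf.2 z

theorem MemBloch.of_norm_deriv_le {g f₁ f₂ : ℂ → ℂ} {a b : ℝ}
    (hg : DifferentiableOn ℂ g (ball 0 1)) (h₁ : MemBloch β f₁) (h₂ : MemBloch β f₂)
    (ha : 0 ≤ a) (hb : 0 ≤ b)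
    (hle : ∀ z ∈ ball (0:ℂ) 1, ‖deriv g z‖ ≤ a * ‖deriv f₁ z‖ + b * ‖deriv f₂ z‖) :
    MemBloch β g ∧ blochSemi β g ≤ a * blochSemi β f₁ + b * blochSemi β f₂ := by
  have hpt : ∀ z : ball (0:ℂ) 1,
      (1 - ‖(z : ℂ)‖ ^ 2) ^ β * ‖deriv g z‖ ≤ a * blochSemi β f₁ + b * blochSemi β f₂ := by
    intro z
    calc _ ≤ (1 - ‖(z : ℂ)‖ ^ 2) ^ β * (a * ‖deriv f₁ z‖ + b * ‖deriv f₂ z‖) :=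
          mul_le_mul_of_nonneg_left (hle z z.2) (blochWeight_nonneg β z.2)
      _ = a * ((1 - ‖(z : ℂ)‖ ^ 2) ^ β * ‖deriv f₁ z‖)
            + b * ((1 - ‖(z : ℂ)‖ ^ 2) ^ β * ‖deriv f₂ z‖) := by ring
      _ ≤ _ := by gcongr; exacts [h₁.le_blochSemi z, h₂.le_blochSemi z]
  exact ⟨⟨hg, ⟨_, Set.forall_mem_range.2 hpt⟩⟩, ciSup_le hpt⟩

end Bloch

theorem stmt_9_general (β : ℝ) (f u L : ℂ → ℂ)
    (hf : MemBloch β f)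
    (hubdd : BddAbove (Set.range fun z : Metric.ball (0:ℂ) 1 => ‖u (z : ℂ)‖))
    (hL : DifferentiableOn ℂ L (Metric.ball 0 1))
    (hLu : ∀ z ∈ Metric.ball (0:ℂ) 1, Complex.exp (L z) = u z)
    (hfu : MemBloch β (fun z => f z * u z))
    (α : ℝ) (hα : 1 < α) :
    MemBloch β (fun z => f z * Complex.exp ((α : ℂ) * L z)) ∧
      blochNorm β (fun z => f z * Complex.exp ((α : ℂ) * L z)) ≤
        supNorm u ^ α * blochNorm β f
          + α * supNorm u ^ (α - 1) * blochNorm β (fun z => f z * u z)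
          + (α - 1) * supNorm u ^ α * blochNorm β f := by
  set M := supNorm u
  have hM : 0 ≤ M := supNorm_nonneg u
  have hMα : 0 ≤ M ^ α := Real.rpow_nonneg hM α
  have hMα1 : 0 ≤ M ^ (α - 1) := Real.rpow_nonneg hM (α - 1)
  obtain ⟨hg, hsemi⟩ := MemBloch.of_norm_deriv_le
    (g := fun z => f z * exp (α * L z)) (hf.1.mul (hL.const_mul _).cexp) hfu hf
    (mul_nonneg (by linarith) hMα1) (mul_nonneg (by linarith) hMα) fun z hz =>
      norm_deriv_mul_cexp_ofReal_mul_le hα.le (hf.1.differentiableAt (isOpen_ball.mem_nhds hz))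
        (hL.differentiableAt (isOpen_ball.mem_nhds hz))
        (eventuallyEq_of_mem (isOpen_ball.mem_nhds hz) hLu) (norm_le_supNorm hubdd hz)
  have hg0 : ‖f 0 * exp (α * L 0)‖ ≤ M ^ α * ‖f 0‖ := by
    rw [norm_mul, norm_exp_ofReal_mul, hLu 0 (mem_ball_self one_pos), mul_comm]
    gcongr
    exact norm_le_supNorm hubdd (mem_ball_self one_pos)
  refine ⟨hg, ?_⟩
  unfold blochNorm
  linarith [mul_nonneg hMα (blochSemi_nonneg β f),
    mul_nonneg (mul_nonneg (by linarith : (0:ℝ) ≤ α) hMα1) (norm_nonneg (f 0 * u 0)),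
    mul_nonneg (mul_nonneg (by linarith : (0:ℝ) ≤ α - 1) hMα) (norm_nonneg (f 0))]

theorem stmt_9 (β : ℝ) (hβ : 0 < β) (f u L : ℂ → ℂ)
    (hf : MemBloch β f)
    (hu : DifferentiableOn ℂ u (Metric.ball 0 1))
    (hubdd : BddAbove (Set.range fun z : Metric.ball (0:ℂ) 1 => ‖u (z : ℂ)‖))
    (hune : ∀ z ∈ Metric.ball (0:ℂ) 1, u z ≠ 0)
    (hL : DifferentiableOn ℂ L (Metric.ball 0 1))
    (hLu : ∀ z ∈ Metric.ball (0:ℂ) 1, Complex.exp (L z) = u z)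
    (hfu : MemBloch β (fun z => f z * u z))
    (α : ℝ) (hα : 1 < α) :
    MemBloch β (fun z => f z * Complex.exp ((α : ℂ) * L z)) ∧
      blochNorm β (fun z => f z * Complex.exp ((α : ℂ) * L z)) ≤
        supNorm u ^ α * blochNorm β f
          + α * supNorm u ^ (α - 1) * blochNorm β (fun z => f z * u z)
          + (α - 1) * supNorm u ^ α * blochNorm β f :=
  stmt_9_general β f u L hf hubdd hL hLu hfu α hα
end

section
/- For real α > 2, a non-vanishing u ∈ H^∞(𝔻), and analytic f on 𝔻, one has the pointwise estimate |(u^α f)″(z)| ≤ C(α) [ ‖u‖_∞^{α−2} |(fu²)″(z)| + ‖u‖_∞^{α−1} |(fu)″(z)| + ‖u‖_∞^{α} |f″(z)| ] for all z ∈ 𝔻, where C(α) is a constant depending only on α. -/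
/-!
Write `u = exp L`. Then `(e^{βL} f)'' = e^{βL} P(β)` with
`P(β) = f'' + β (L'' f + 2 L' f') + β² L'² f` a quadratic polynomial in `β`, and `f u² = e^{2L} f`,
`f u = e^{L} f`. Lagrange interpolation of `P` at the nodes `0, 1, 2` expresses `(u^α f)''` as
`u^{α-2} (f u²)''`, `u^{α-1} (f u)''` and `u^α f''` with coefficients depending only on `α`,
and `|u^γ| ≤ ‖u‖_∞^γ` for `γ ≥ 0`.
-/

open Complex Filter Topology

lemma norm_cexp_ofReal_mul (γ : ℝ) (w : ℂ) : ‖exp (γ * w)‖ = ‖exp w‖ ^ γ := by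
  rw [norm_exp, norm_exp, re_ofReal_mul, mul_comm, Real.exp_mul]

lemma deriv_cexp_const_mul_mul {f L : ℂ → ℂ} {z : ℂ} (hf : DifferentiableAt ℂ f z)
    (hL : DifferentiableAt ℂ L z) (β : ℂ) :
    deriv (fun w => exp (β * L w) * f w) z = exp (β * L z) * (β * deriv L z * f z + deriv f z) :=
  ((hL.hasDerivAt.const_mul β).cexp.mul hf.hasDerivAt).deriv.trans (by ring)

lemma deriv_deriv_cexp_const_mul_mul {s : Set ℂ} (hs : IsOpen s) {f L : ℂ → ℂ}
    (hf : DifferentiableOn ℂ f s) (hL : DifferentiableOn ℂ L s) (β : ℂ) {z : ℂ} (hz : z ∈ s) :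
    deriv (deriv fun w => exp (β * L w) * f w) z =
      exp (β * L z) * (deriv (deriv f) z
        + β * (deriv (deriv L) z * f z + 2 * deriv L z * deriv f z)
        + β ^ 2 * (deriv L z ^ 2 * f z)) := by
  have hdiff : ∀ {g : ℂ → ℂ}, DifferentiableOn ℂ g s → ∀ {w}, w ∈ s → DifferentiableAt ℂ g w :=
    fun hg _ hw => hg.differentiableAt (hs.mem_nhds hw)
  set g := fun w => β * deriv L w * f w + deriv f w
  have hg : HasDerivAt g (β * deriv (deriv L) z * f z + β * deriv L z * deriv f z
      + deriv (deriv f) z) z :=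
    (((hdiff (hL.deriv hs) hz).hasDerivAt.const_mul β).mul (hdiff hf hz).hasDerivAt).add
      (hdiff (hf.deriv hs) hz).hasDerivAt
  have hfirst : deriv (fun w => exp (β * L w) * f w) =ᶠ[𝓝 z] fun w => exp (β * L w) * g w :=
    eventuallyEq_of_mem (hs.mem_nhds hz) fun w hw =>
      deriv_cexp_const_mul_mul (hdiff hf hw) (hdiff hL hw) β
  rw [hfirst.deriv_eq, deriv_cexp_const_mul_mul hg.differentiableAt (hdiff hL hz), hg.deriv]
  ring

/-- Lagrange interpolation of the quadratic `P(β)` at the nodes `0, 1, 2`. -/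
lemma deriv_deriv_cexp_const_mul_mul_eq_interpolation {s : Set ℂ} (hs : IsOpen s) {f L : ℂ → ℂ}
    (hf : DifferentiableOn ℂ f s) (hL : DifferentiableOn ℂ L s) (β : ℂ) {z : ℂ} (hz : z ∈ s) :
    deriv (deriv fun w => exp (β * L w) * f w) z =
      β * (β - 1) / 2 * exp ((β - 2) * L z) * deriv (deriv fun w => exp (2 * L w) * f w) z
      + β * (2 - β) * exp ((β - 1) * L z) * deriv (deriv fun w => exp (L w) * f w) z
      + (β - 1) * (β - 2) / 2 * exp (β * L z) * deriv (deriv f) z := by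
  have hone := deriv_deriv_cexp_const_mul_mul hs hf hL 1 hz
  simp only [one_mul, one_pow] at hone
  have hexp2 : exp ((β - 2) * L z) * exp (2 * L z) = exp (β * L z) := by rw [← exp_add]; ring_nf
  have hexp1 : exp ((β - 1) * L z) * exp (L z) = exp (β * L z) := by rw [← exp_add]; ring_nf
  rw [deriv_deriv_cexp_const_mul_mul hs hf hL β hz, deriv_deriv_cexp_const_mul_mul hs hf hL 2 hz,
    hone]
  set a := deriv (deriv L) z * f z + 2 * deriv L z * deriv f z
  set b := deriv L z ^ 2 * f z
  set c := deriv (deriv f) z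
  linear_combination -(β * (β - 1) / 2 * (c + 2 * a + 2 ^ 2 * b)) * hexp2
    - (β * (2 - β) * (c + a + b)) * hexp1

lemma norm_mul_mul_le_of_le {R : Type*} [SeminormedRing R] {c E D : R} {K M : ℝ}
    (hc : ‖c‖ ≤ K) (hE : ‖E‖ ≤ M) : ‖c * E * D‖ ≤ K * (M * ‖D‖) := by
  have hK : 0 ≤ K := (norm_nonneg c).trans hc
  calc ‖c * E * D‖ ≤ ‖c‖ * ‖E‖ * ‖D‖ := norm_mul₃_le
    _ ≤ K * (M * ‖D‖) := by rw [mul_assoc]; gcongr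

theorem stmt_11 (α : ℝ) (hα : 2 < α) :
    ∃ C > 0, ∀ (f u L : ℂ → ℂ) (Mu : ℝ),
      DifferentiableOn ℂ f (Metric.ball 0 1) →
      DifferentiableOn ℂ u (Metric.ball 0 1) →
      (∀ z ∈ Metric.ball (0:ℂ) 1, u z ≠ 0) →
      DifferentiableOn ℂ L (Metric.ball 0 1) →
      (∀ z ∈ Metric.ball (0:ℂ) 1, Complex.exp (L z) = u z) →
      (∀ z ∈ Metric.ball (0:ℂ) 1, ‖u z‖ ≤ Mu) →
      ∀ z ∈ Metric.ball (0:ℂ) 1,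
        ‖deriv (deriv (fun w => Complex.exp ((α : ℂ) * L w) * f w)) z‖ ≤
          C * (Mu ^ (α - 2) * ‖deriv (deriv (fun w => f w * u w ^ 2)) z‖
              + Mu ^ (α - 1) * ‖deriv (deriv (fun w => f w * u w)) z‖
              + Mu ^ α * ‖deriv (deriv f) z‖) := by
  set K := ‖(α : ℂ) * (α - 1) / 2‖ + ‖(α : ℂ) * (2 - α)‖ + ‖((α : ℂ) - 1) * (α - 2) / 2‖ + 1
  refine ⟨K, by positivity, fun f u L Mu hf _ _ hL hexp hMu z hz => ?_⟩
  have hs : IsOpen (Metric.ball (0 : ℂ) 1) := Metric.isOpen_ball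
  have hexpL : ∀ γ : ℝ, 0 ≤ γ → ‖exp (γ * L z)‖ ≤ Mu ^ γ := fun γ hγ => by
    rw [norm_cexp_ofReal_mul, hexp z hz]
    exact Real.rpow_le_rpow (norm_nonneg _) (hMu z hz) hγ
  have hu2 : deriv (deriv fun w => f w * u w ^ 2) z =
      deriv (deriv fun w => exp (2 * L w) * f w) z :=
    (eventuallyEq_of_mem (hs.mem_nhds hz) fun w hw => by
      simp only [← hexp w hw, two_mul, exp_add]; ring).deriv.deriv_eq
  have hu1 : deriv (deriv fun w => f w * u w) z = deriv (deriv fun w => exp (L w) * f w) z :=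
    (eventuallyEq_of_mem (hs.mem_nhds hz) fun w hw => by
      simp only [← hexp w hw, mul_comm]).deriv.deriv_eq
  rw [hu2, hu1, deriv_deriv_cexp_const_mul_mul_eq_interpolation hs hf hL α hz, mul_add, mul_add]
  have hc₁ := norm_nonneg ((α : ℂ) * (α - 1) / 2)
  have hc₂ := norm_nonneg ((α : ℂ) * (2 - α))
  have hc₃ := norm_nonneg (((α : ℂ) - 1) * (α - 2) / 2)
  refine norm_add₃_le.trans (add_le_add_three ?_ ?_ ?_) <;>
    refine norm_mul_mul_le_of_le (by linarith) ?_
  · simpa using hexpL (α - 2) (by linarith)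
  · simpa using hexpL (α - 1) (by linarith)
  · exact hexpL α (by linarith)
end

section
/- Let X be a Banach space of analytic functions on a bounded domain Ω satisfying: point evaluations are bounded; 1 ∈ X; z·f ∈ X whenever f ∈ X; and the non-integer-power axiom (A4). If a bounded weighted composition operator W_{F,φ} f = F·(f∘φ) is surjective on X, then the composition symbol φ is injective on Ω. -/
theorem Set.leftInvOn_div_of_mul_comp {K β : Type*} [Field K] {s : Set K} {F : K → K}
    {φ : K → β} {u v : β → K} (hu : ∀ z ∈ s, F z * u (φ z) = 1)
    (hv : ∀ z ∈ s, F z * v (φ z) = z) :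
    Set.LeftInvOn (fun w => v w / u w) φ s := by
  intro z hz
  have hF : F z = (u (φ z))⁻¹ := eq_inv_of_mul_eq_one_left (hu z hz)
  show v (φ z) / u (φ z) = z
  rw [div_eq_mul_inv, ← hF, mul_comm, hv z hz]

theorem stmt_12_general (Ω : Set ℂ)
    (X : Set (ℂ → ℂ))
    -- (A2): the constant function 1 belongs to X
    (hA2 : (fun _ : ℂ => (1 : ℂ)) ∈ X)
    -- (A3): multiplication by the identity function preserves X
    (hA3 : ∀ f ∈ X, (fun z => z * f z) ∈ X)
    -- the symbols of the weighted composition operator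
    (F φ : ℂ → ℂ)
    -- W_{F,φ} is surjective
    (hsurj : ∀ g ∈ X, ∃ f ∈ X, ∀ z ∈ Ω, F z * f (φ z) = g z) :
    Set.InjOn φ Ω := by
  obtain ⟨u, -, hu⟩ := hsurj _ hA2
  obtain ⟨v, -, hv⟩ := hsurj _ (hA3 _ hA2)
  exact (Set.leftInvOn_div_of_mul_comp hu fun z hz => (hv z hz).trans (mul_one z)).injOn

theorem stmt_12 (Ω : Set ℂ) (hΩ : IsOpen Ω) (hconn : IsConnected Ω)
    (hbdd : Bornology.IsBounded Ω)
    (X : Set (ℂ → ℂ)) (N : (ℂ → ℂ) → ℝ)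
    -- X consists of analytic functions on Ω
    (hX : ∀ f ∈ X, DifferentiableOn ℂ f Ω)
    -- (A1): point evaluation functionals are bounded
    (hA1 : ∀ z ∈ Ω, ∃ C : ℝ, ∀ f ∈ X, ‖f z‖ ≤ C * N f)
    -- (A2): the constant function 1 belongs to X
    (hA2 : (fun _ : ℂ => (1 : ℂ)) ∈ X)
    -- (A3): multiplication by the identity function preserves X
    (hA3 : ∀ f ∈ X, (fun z => z * f z) ∈ X)
    -- (A4): the non-integer power axiom, with `u^α := exp (α · log u)`
    (hA4 : ∀ u L : ℂ → ℂ, DifferentiableOn ℂ u Ω → DifferentiableOn ℂ L Ω →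
      (∀ z ∈ Ω, Complex.exp (L z) = u z) → (∃ M : ℝ, ∀ z ∈ Ω, ‖u z‖ ≤ M) →
      ∀ f ∈ X, (∀ n : ℕ, 0 < n → (fun z => f z * u z ^ n) ∈ X) →
        ∃ α : ℝ, 0 < α ∧ (¬ ∃ k : ℤ, α = (k : ℝ)) ∧
          (fun z => f z * Complex.exp ((α : ℂ) * L z)) ∈ X)
    -- the symbols of the weighted composition operator
    (F φ : ℂ → ℂ) (hF : DifferentiableOn ℂ F Ω) (hφ : DifferentiableOn ℂ φ Ω)
    (hmaps : Set.MapsTo φ Ω Ω)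
    -- W_{F,φ} maps X into X and is bounded
    (hW : ∀ f ∈ X, (fun z => F z * f (φ z)) ∈ X)
    (hWbdd : ∃ C : ℝ, ∀ f ∈ X, N (fun z => F z * f (φ z)) ≤ C * N f)
    -- W_{F,φ} is surjective
    (hsurj : ∀ g ∈ X, ∃ f ∈ X, ∀ z ∈ Ω, F z * f (φ z) = g z) :
    Set.InjOn φ Ω :=
  stmt_12_general Ω X hA2 hA3 F φ hsurj
end

section
/- Let X be a Banach space of analytic functions on the unit disk satisfying axioms (A1)–(A4) and whose norm is ‖f‖ = |f(0)| + p(f) for a translation-invariant seminorm p. If W_{F,φ} f = F·(f∘φ) is a surjective linear isometry of X, then φ(0) = 0. -/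
/-!
Write `a = φ 0` and `W f = F · (f ∘ φ)`. Testing the isometry on `1`, `z` and `z - a` gives
`‖F 0‖ + p F = 1`, `‖F 0‖ ‖a‖ + p (F φ) = p z` and `p (F (φ - a)) = ‖a‖ + p z`, while subadditivity
gives `p (F (φ - a)) ≤ p (F φ) + ‖a‖ p F`. Together these force `2 ‖F 0‖ ‖a‖ ≤ 0`, so if `a ≠ 0`
then `F 0 = 0`; but then every `W f` vanishes at `0`, and `W` cannot reach the constant `1`.
-/

section TranslationInvariantSeminorm

variable {p : (ℂ → ℂ) → ℝ}

lemma seminorm_const_eq_zero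
    (hhom : ∀ (c : ℂ) (f : ℂ → ℂ), p (fun z => c * f z) = ‖c‖ * p f)
    (htrans : ∀ (f : ℂ → ℂ) (C : ℂ), p (fun z => f z + C) = p f) (c : ℂ) :
    p (fun _ => c) = 0 := by
  have p_zero : p (fun _ => 0) = 0 := by simpa using hhom 0 (fun _ => 0)
  simpa [p_zero] using htrans (fun _ => 0) c

lemma seminorm_mul_add_const_le
    (hhom : ∀ (c : ℂ) (f : ℂ → ℂ), p (fun z => c * f z) = ‖c‖ * p f)
    (hpsub : ∀ f g : ℂ → ℂ, p (fun z => f z + g z) ≤ p f + p g) (F g : ℂ → ℂ) (c : ℂ) :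
    p (fun z => F z * (g z + c)) ≤ p (fun z => F z * g z) + ‖c‖ * p F :=
  calc p (fun z => F z * (g z + c)) = p (fun z => F z * g z + c * F z) := by
        congr 1; funext z; ring
    _ ≤ p (fun z => F z * g z) + p (fun z => c * F z) := hpsub _ _
    _ = p (fun z => F z * g z) + ‖c‖ * p F := by rw [hhom]

theorem eq_zero_or_weight_eq_zero_of_isometry {N : (ℂ → ℂ) → ℝ} (X : Set (ℂ → ℂ))
    (hN : ∀ f, N f = ‖f 0‖ + p f)
    (hhom : ∀ (c : ℂ) (f : ℂ → ℂ), p (fun z => c * f z) = ‖c‖ * p f)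
    (hpsub : ∀ f g : ℂ → ℂ, p (fun z => f z + g z) ≤ p f + p g)
    (htrans : ∀ (f : ℂ → ℂ) (C : ℂ), p (fun z => f z + C) = p f) (F φ : ℂ → ℂ)
    (hiso : ∀ f ∈ X, N (fun z => F z * f (φ z)) = N f)
    (hone : (fun _ => 1) ∈ X) (hid : (fun z => z) ∈ X) (hshift : (fun z => z + -φ 0) ∈ X) :
    φ 0 = 0 ∨ F 0 = 0 := by
  have pconst := seminorm_const_eq_zero hhom htrans
  have at_one : ‖F 0‖ + p F = 1 := by
    simpa [hN, pconst] using hiso _ hone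
  have at_id : ‖F 0‖ * ‖φ 0‖ + p (fun z => F z * φ z) = p (fun z => z) := by
    simpa [hN] using hiso _ hid
  have at_shift : p (fun z => F z * (φ z + -φ 0)) = ‖φ 0‖ + p (fun z => z) := by
    simpa [hN, htrans (fun z => z)] using hiso _ hshift
  have hle := seminorm_mul_add_const_le hhom hpsub F φ (-φ 0)
  rw [norm_neg] at hle
  have hprod : ‖F 0‖ * ‖φ 0‖ = 0 := by
    have p_F : p F = 1 - ‖F 0‖ := by linarith
    rw [p_F] at hle
    nlinarith [mul_nonneg (norm_nonneg (F 0)) (norm_nonneg (φ 0))]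
  simpa [or_comm] using hprod

end TranslationInvariantSeminorm

theorem stmt_16_general
    (X : Set (ℂ → ℂ)) (p : (ℂ → ℂ) → ℝ) (N : (ℂ → ℂ) → ℝ)
    -- (A6): the norm is ‖f‖ = |f(0)| + p(f) with p a translation-invariant seminorm
    (hN : ∀ f, N f = ‖f 0‖ + p f)
    (hhom : ∀ (c : ℂ) (f : ℂ → ℂ), p (fun z => c * f z) = ‖c‖ * p f)
    (hpsub : ∀ f g : ℂ → ℂ, p (fun z => f z + g z) ≤ p f + p g)
    (htrans : ∀ (f : ℂ → ℂ) (C : ℂ), p (fun z => f z + C) = p f)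
    -- (A2): the constant functions belong to X
    (hA2 : ∀ c : ℂ, (fun _ : ℂ => c) ∈ X)
    -- (A3): multiplication by the identity function preserves X
    (hA3 : ∀ f ∈ X, (fun z => z * f z) ∈ X)
    -- X is closed under sums (it is a vector space)
    (hadd : ∀ f ∈ X, ∀ g ∈ X, (fun z => f z + g z) ∈ X)
    -- the symbols of the weighted composition operator
    (F φ : ℂ → ℂ)
    -- W_{F,φ} is surjective
    (hsurj : ∀ g ∈ X, ∃ f ∈ X, ∀ z ∈ Metric.ball (0:ℂ) 1, F z * f (φ z) = g z)
    -- W_{F,φ} is an isometry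
    (hiso : ∀ f ∈ X, N (fun z => F z * f (φ z)) = N f) :
    φ 0 = 0 := by
  have hid : (fun z : ℂ => z) ∈ X := by simpa using hA3 _ (hA2 1)
  rcases eq_zero_or_weight_eq_zero_of_isometry X hN hhom hpsub htrans F φ hiso (hA2 1) hid
    (hadd _ hid _ (hA2 _)) with hφ0 | hF0
  · exact hφ0
  · obtain ⟨g, -, hg⟩ := hsurj (fun _ => 1) (hA2 1)
    simpa [hF0] using hg 0 (Metric.mem_ball_self one_pos)

theorem stmt_16
    (X : Set (ℂ → ℂ)) (p : (ℂ → ℂ) → ℝ) (N : (ℂ → ℂ) → ℝ)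
    -- X consists of analytic functions on the unit disk
    (hX : ∀ f ∈ X, DifferentiableOn ℂ f (Metric.ball 0 1))
    -- (A6): the norm is ‖f‖ = |f(0)| + p(f) with p a translation-invariant seminorm
    (hN : ∀ f, N f = ‖f 0‖ + p f)
    (hp0 : ∀ f, 0 ≤ p f)
    (hhom : ∀ (c : ℂ) (f : ℂ → ℂ), p (fun z => c * f z) = ‖c‖ * p f)
    (hpsub : ∀ f g : ℂ → ℂ, p (fun z => f z + g z) ≤ p f + p g)
    (htrans : ∀ (f : ℂ → ℂ) (C : ℂ), p (fun z => f z + C) = p f)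
    -- (A1): point evaluation functionals are bounded
    (hA1 : ∀ z ∈ Metric.ball (0:ℂ) 1, ∃ C : ℝ, ∀ f ∈ X, ‖f z‖ ≤ C * N f)
    -- (A2): the constant functions belong to X
    (hA2 : ∀ c : ℂ, (fun _ : ℂ => c) ∈ X)
    -- (A3): multiplication by the identity function preserves X
    (hA3 : ∀ f ∈ X, (fun z => z * f z) ∈ X)
    -- (A4): the non-integer power axiom, with `u^α := exp (α · log u)`
    (hA4 : ∀ u L : ℂ → ℂ, DifferentiableOn ℂ u (Metric.ball 0 1) →
      DifferentiableOn ℂ L (Metric.ball 0 1) →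
      (∀ z ∈ Metric.ball (0:ℂ) 1, Complex.exp (L z) = u z) →
      (∃ M : ℝ, ∀ z ∈ Metric.ball (0:ℂ) 1, ‖u z‖ ≤ M) →
      ∀ f ∈ X, (∀ n : ℕ, 0 < n → (fun z => f z * u z ^ n) ∈ X) →
        ∃ α : ℝ, 0 < α ∧ (¬ ∃ k : ℤ, α = (k : ℝ)) ∧
          (fun z => f z * Complex.exp ((α : ℂ) * L z)) ∈ X)
    -- X is closed under sums (it is a vector space)
    (hadd : ∀ f ∈ X, ∀ g ∈ X, (fun z => f z + g z) ∈ X)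
    -- the symbols of the weighted composition operator
    (F φ : ℂ → ℂ) (hF : DifferentiableOn ℂ F (Metric.ball 0 1))
    (hφ : DifferentiableOn ℂ φ (Metric.ball 0 1))
    (hmaps : Set.MapsTo φ (Metric.ball 0 1) (Metric.ball 0 1))
    -- W_{F,φ} maps X into X
    (hW : ∀ f ∈ X, (fun z => F z * f (φ z)) ∈ X)
    -- W_{F,φ} is surjective
    (hsurj : ∀ g ∈ X, ∃ f ∈ X, ∀ z ∈ Metric.ball (0:ℂ) 1, F z * f (φ z) = g z)
    -- W_{F,φ} is an isometry
    (hiso : ∀ f ∈ X, N (fun z => F z * f (φ z)) = N f) :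
    φ 0 = 0 :=
  stmt_16_general X p N hN hhom hpsub htrans hA2 hA3 hadd F φ hsurj hiso
end
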